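/- arXiv:1711.03739 — 6 statements merged into one kernel-verified Lean document; each statement's English description precedes it below -/
import Mathlib

section
/- Let Φ be an n×n real matrix with Φ_{ii} = −1 for all i, Φ_{ij} ≥ 0 for i ≠ j, and all column sums equal to zero. Let σ ∈ ℝ^n have strictly positive entries and let r > 0. Then every eigenvalue of the matrix σ▷Φ − r·id has strictly negative real part; in particular det(σ▷Φ − r·id) ≠ 0. -/
/-!
Gershgorin's theorem applied to columns: column `k` of `σ ▷ Φ - r • 1` has diagonal entry
`-σ k - r` and off-diagonal entries `σ k * Φ i k ≥ 0` summing to `σ k`, so every eigenvalue lies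
in a disc centred at `-σ k - r` of radius `σ k`, whose points have real part at most `-r < 0`.
The same column dominance gives `det ≠ 0` directly.
-/

/-- Column-wise scaling of a matrix `Φ` by a vector `σ`. -/
def colScale {n : ℕ} (σ : Fin n → ℝ) (Φ : Matrix (Fin n) (Fin n) ℝ) :
    Matrix (Fin n) (Fin n) ℝ :=
  Matrix.of fun i j => σ j * Φ i j

open Finset

namespace Matrix

variable {ι : Type*} [Fintype ι] [DecidableEq ι]

theorem re_lt_of_isRoot_charpoly_of_sum_col_lt {B : Matrix ι ι ℂ} {c : ℝ}
    (h : ∀ k, (B k k).re + ∑ i ∈ univ.erase k, ‖B i k‖ < c) {μ : ℂ}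
    (hμ : B.charpoly.IsRoot μ) : μ.re < c := by
  -- if `c ≤ μ.re`, then `μ • 1 - B` is strictly column dominant, yet singular
  by_contra! hc
  refine det_ne_zero_of_sum_col_lt_diag (A := scalar ι μ - B) (fun k => ?_) ?_
  · calc ∑ i ∈ univ.erase k, ‖(scalar ι μ - B) i k‖
        _ = ∑ i ∈ univ.erase k, ‖B i k‖ := sum_congr rfl fun i hi => by
          simp [diagonal_apply_ne _ (ne_of_mem_erase hi)]
        _ < μ.re - (B k k).re := by linarith [h k]
        _ = (μ - B k k).re := (Complex.sub_re _ _).symm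
        _ ≤ ‖(scalar ι μ - B) k k‖ := by simpa using Complex.re_le_norm (μ - B k k)
  · rwa [← eval_charpoly]

end Matrix

section Flux

variable {n : ℕ} {Φ : Matrix (Fin n) (Fin n) ℝ}

theorem sum_erase_eq_one_of_diag_eq_neg_one (hdiag : ∀ i, Φ i i = -1)
    (hcol : ∀ j, ∑ i, Φ i j = 0) (k : Fin n) : ∑ i ∈ univ.erase k, Φ i k = 1 := by
  have := sum_erase_add univ (fun i => Φ i k) (mem_univ k)
  rw [hdiag k, hcol k] at this
  linarith

theorem colScale_sub_smul_apply_self (σ : Fin n → ℝ) (r : ℝ) (hdiag : ∀ i, Φ i i = -1)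
    (k : Fin n) : (colScale σ Φ - r • (1 : Matrix (Fin n) (Fin n) ℝ)) k k = -σ k - r := by
  simp [colScale, hdiag k]

theorem sum_erase_abs_colScale_sub_smul (σ : Fin n → ℝ) (r : ℝ) (hdiag : ∀ i, Φ i i = -1)
    (hoff : ∀ i j, i ≠ j → 0 ≤ Φ i j) (hcol : ∀ j, ∑ i, Φ i j = 0) {k : Fin n}
    (hσ : 0 ≤ σ k) :
    ∑ i ∈ univ.erase k, |(colScale σ Φ - r • (1 : Matrix (Fin n) (Fin n) ℝ)) i k| = σ k := by
  calc ∑ i ∈ univ.erase k, |(colScale σ Φ - r • (1 : Matrix (Fin n) (Fin n) ℝ)) i k|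
      _ = ∑ i ∈ univ.erase k, σ k * Φ i k := sum_congr rfl fun i hi => by
        have hik := ne_of_mem_erase hi
        simp [colScale, Matrix.one_apply_ne hik, abs_of_nonneg (mul_nonneg hσ (hoff i k hik))]
      _ = σ k := by rw [← mul_sum, sum_erase_eq_one_of_diag_eq_neg_one hdiag hcol, mul_one]

end Flux

/-- For a flux matrix `Φ` (diagonal `-1`, nonnegative off-diagonal, zero column sums),
`σ > 0` and `r > 0`, every eigenvalue of `σ ▷ Φ - r·id` has strictly negative real part;
in particular the determinant is nonzero. -/
theorem colScale_sub_smul_stable {n : ℕ}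
    (Φ : Matrix (Fin n) (Fin n) ℝ) (σ : Fin n → ℝ) (r : ℝ)
    (hdiag : ∀ i, Φ i i = -1)
    (hoff : ∀ i j, i ≠ j → 0 ≤ Φ i j)
    (hcol : ∀ j, ∑ i, Φ i j = 0)
    (hσ : ∀ i, 0 < σ i) (hr : 0 < r) :
    (∀ μ : ℂ,
        ((colScale σ Φ - r • (1 : Matrix (Fin n) (Fin n) ℝ)).map
            (Complex.ofReal)).charpoly.IsRoot μ → μ.re < 0) ∧
      (colScale σ Φ - r • (1 : Matrix (Fin n) (Fin n) ℝ)).det ≠ 0 := by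
  have hdiagA := colScale_sub_smul_apply_self σ r hdiag
  have hsum k := sum_erase_abs_colScale_sub_smul σ r hdiag hoff hcol (hσ k).le
  constructor
  · intro μ hμ
    refine Matrix.re_lt_of_isRoot_charpoly_of_sum_col_lt (fun k => ?_) hμ
    simp only [Matrix.map_apply, Complex.ofReal_re, Complex.norm_real, Real.norm_eq_abs,
      hsum, hdiagA]
    linarith
  · refine det_ne_zero_of_sum_col_lt_diag fun k => ?_
    simp only [Real.norm_eq_abs, hsum, hdiagA]
    rw [abs_of_neg (by linarith [hσ k])]
    linarith
end

section
/- Let Φ = Φ₊ − id where Φ₊ is an n×n nonnegative irreducible matrix with zero diagonal and all column sums of Φ equal to zero, and let σ ∈ ℝ^n be strictly positive. Then the kernel of σ▷Φ contains a strictly positive vector x, and this positive solution of (σ▷Φ)x = 0 is unique up to positive scalar multiples. -/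
/-- A nonnegative matrix is irreducible if its associated directed graph is strongly
connected, i.e. some power connects every pair of indices with a positive entry. -/
def MatIrreducible {n : ℕ} (M : Matrix (Fin n) (Fin n) ℝ) : Prop :=
  ∀ i j, ∃ k : ℕ, 0 < (M ^ k) i j

open Matrix

theorem colScale_mulVec {n : ℕ} (σ : Fin n → ℝ) (Φ : Matrix (Fin n) (Fin n) ℝ)
    (y : Fin n → ℝ) : colScale σ Φ *ᵥ y = Φ *ᵥ (σ * y) := by
  ext i
  simp only [colScale, mulVec, dotProduct, of_apply, Pi.mul_apply]
  exact Finset.sum_congr rfl fun j _ => by ring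

namespace Matrix

theorem pow_mulVec_eq_self {ι α : Type*} [Fintype ι] [DecidableEq ι] [Semiring α]
    {M : Matrix ι ι α} {w : ι → α} (hw : M *ᵥ w = w) (k : ℕ) : (M ^ k) *ᵥ w = w := by
  induction k with
  | zero => exact one_mulVec w
  | succ k ih => rw [pow_succ, ← mulVec_mulVec, hw, ih]

variable {ι : Type*} [Fintype ι] [DecidableEq ι] {M : Matrix ι ι ℝ}

theorem exists_ne_zero_mulVec_eq_self_of_mem_colStochastic [Nonempty ι]
    (hM : M ∈ colStochastic ℝ ι) : ∃ z ≠ 0, M *ᵥ z = z := by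
  have hdet : (M - 1).det = 0 := by
    refine exists_vecMul_eq_zero_iff.1 ⟨1, one_ne_zero, ?_⟩
    rw [vecMul_sub, one_vecMul_of_mem_colStochastic hM, vecMul_one, sub_self]
  obtain ⟨z, hz_ne, hz⟩ := exists_mulVec_eq_zero_iff.2 hdet
  exact ⟨z, hz_ne, by rwa [sub_mulVec, one_mulVec, sub_eq_zero] at hz⟩

theorem mulVec_abs_eq_abs_of_mem_colStochastic (hM : M ∈ colStochastic ℝ ι) {z : ι → ℝ}
    (hz : M *ᵥ z = z) : M *ᵥ |z| = |z| := by
  have hle : |z| ≤ M *ᵥ |z| := fun i => by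
    calc |z i| = |∑ j, M i j * z j| := by rw [← congrFun hz i]; rfl
      _ ≤ ∑ j, |M i j * z j| := Finset.abs_sum_le_sum_abs _ _
      _ = (M *ᵥ |z|) i := by
        simp only [abs_mul, abs_of_nonneg (nonneg_of_mem_colStochastic hM)]; rfl
  have hsum : ∑ i, (M *ᵥ |z|) i = ∑ i, |z| i := sum_mulVec_of_mem_colStochastic hM
  funext i
  exact ((Finset.sum_eq_sum_iff_of_le fun i _ => hle i).1 hsum.symm i (Finset.mem_univ i)).symm

section Nonneg

variable (hM : ∀ i j, 0 ≤ M i j) {w : ι → ℝ} (hw : M *ᵥ w = w) (hw₀ : 0 ≤ w)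
include hM hw hw₀

theorem apply_pos_of_mulVec_eq_self {i j : ι} {k : ℕ} (hk : 0 < (M ^ k) i j) (hj : 0 < w j) :
    0 < w i :=
  calc 0 < (M ^ k) i j * w j := mul_pos hk hj
    _ ≤ ∑ l, (M ^ k) i l * w l :=
      Finset.single_le_sum (f := fun l => (M ^ k) i l * w l)
        (fun l _ => mul_nonneg (pow_apply_nonneg hM k i l) (hw₀ l)) (Finset.mem_univ j)
    _ = w i := congrFun (pow_mulVec_eq_self hw k) i

variable (hirr : ∀ i j, ∃ k : ℕ, 0 < (M ^ k) i j)
include hirr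

theorem pos_of_mulVec_eq_self (hw_ne : w ≠ 0) (i : ι) : 0 < w i := by
  obtain ⟨j, hj⟩ : ∃ j, 0 < w j := by
    by_contra! h
    exact hw_ne (le_antisymm h hw₀)
  obtain ⟨k, hk⟩ := hirr i j
  exact apply_pos_of_mulVec_eq_self hM hw hw₀ hk hj

theorem eq_zero_of_mulVec_eq_self_of_apply_eq_zero {i : ι} (hi : w i = 0) : w = 0 := by
  by_contra hw_ne
  exact (pos_of_mulVec_eq_self hM hw hw₀ hirr hw_ne i).ne' hi

end Nonneg

theorem exists_pos_smul_of_mulVec_eq_self (hM : ∀ i j, 0 ≤ M i j)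
    (hirr : ∀ i j, ∃ k : ℕ, 0 < (M ^ k) i j) {x y : ι → ℝ} (hx₀ : ∀ i, 0 < x i)
    (hy₀ : ∀ i, 0 < y i) (hx : M *ᵥ x = x) (hy : M *ᵥ y = y) : ∃ c : ℝ, 0 < c ∧ y = c • x := by
  cases isEmpty_or_nonempty ι
  · exact ⟨1, one_pos, Subsingleton.elim _ _⟩
  obtain ⟨i₀, -, hi₀⟩ := Finset.univ.exists_min_image (fun i => y i / x i) Finset.univ_nonempty
  set c := y i₀ / x i₀
  have hw₀ : 0 ≤ y - c • x := fun i => by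
    have : c * x i ≤ y i := (le_div_iff₀ (hx₀ i)).1 (hi₀ i (Finset.mem_univ i))
    simpa using this
  have hw : M *ᵥ (y - c • x) = y - c • x := by rw [mulVec_sub, mulVec_smul, hx, hy]
  have hwi₀ : (y - c • x) i₀ = 0 := by simp [c, div_mul_cancel₀ _ (hx₀ i₀).ne']
  refine ⟨c, div_pos (hy₀ i₀) (hx₀ i₀), ?_⟩
  exact sub_eq_zero.1 (eq_zero_of_mulVec_eq_self_of_apply_eq_zero hM hw hw₀ hirr hwi₀)

theorem exists_pos_mulVec_eq_self_of_mem_colStochastic (hM : M ∈ colStochastic ℝ ι)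
    (hirr : ∀ i j, ∃ k : ℕ, 0 < (M ^ k) i j) : ∃ x : ι → ℝ, (∀ i, 0 < x i) ∧ M *ᵥ x = x := by
  cases isEmpty_or_nonempty ι
  · exact ⟨0, isEmptyElim, Subsingleton.elim _ _⟩
  obtain ⟨z, hz_ne, hz⟩ := exists_ne_zero_mulVec_eq_self_of_mem_colStochastic hM
  have hz' := mulVec_abs_eq_abs_of_mem_colStochastic hM hz
  exact ⟨|z|, pos_of_mulVec_eq_self (fun _ _ => nonneg_of_mem_colStochastic hM) hz'
    (abs_nonneg z) hirr fun h => hz_ne (funext fun i => abs_eq_zero.1 (congrFun h i)), hz'⟩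

end Matrix

theorem colScale_kernel_positive_general {n : ℕ}
    (Φ Φp : Matrix (Fin n) (Fin n) ℝ) (σ : Fin n → ℝ)
    (hΦ : Φ = Φp - 1)
    (hΦp_nonneg : ∀ i j, 0 ≤ Φp i j)
    (hΦp_irr : MatIrreducible Φp)
    (hcol : ∀ j, ∑ i, Φ i j = 0)
    (hσ : ∀ i, 0 < σ i) :
    ∃ x : Fin n → ℝ, (∀ i, 0 < x i) ∧ (colScale σ Φ).mulVec x = 0 ∧
      ∀ y : Fin n → ℝ, (∀ i, 0 < y i) → (colScale σ Φ).mulVec y = 0 →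
        ∃ c : ℝ, 0 < c ∧ y = c • x := by
  have hstoch : Φp ∈ colStochastic ℝ (Fin n) := by
    refine mem_colStochastic_iff_sum.2 ⟨hΦp_nonneg, fun j => ?_⟩
    simpa [hΦ, Finset.sum_sub_distrib, one_apply, sub_eq_zero] using hcol j
  have hker (y : Fin n → ℝ) : colScale σ Φ *ᵥ y = 0 ↔ Φp *ᵥ (σ * y) = σ * y := by
    rw [colScale_mulVec, hΦ, sub_mulVec, one_mulVec, sub_eq_zero]
  obtain ⟨x, hx₀, hx⟩ := exists_pos_mulVec_eq_self_of_mem_colStochastic hstoch hΦp_irr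
  have hσx : σ * (x / σ) = x := funext fun i => mul_div_cancel₀ (x i) (hσ i).ne'
  refine ⟨x / σ, fun i => div_pos (hx₀ i) (hσ i), (hker _).2 (hσx.symm ▸ hx), fun y hy₀ hy => ?_⟩
  obtain ⟨c, hc, hσy⟩ := exists_pos_smul_of_mulVec_eq_self hΦp_nonneg hΦp_irr hx₀
    (fun i => mul_pos (hσ i) (hy₀ i)) hx ((hker y).1 hy)
  refine ⟨c, hc, funext fun i => ?_⟩
  have hi : σ i * y i = c * x i := congrFun hσy i
  rw [Pi.smul_apply, Pi.div_apply, smul_eq_mul, mul_div_assoc', eq_div_iff (hσ i).ne', mul_comm, hi]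

/-- If `Φ = Φ₊ - id` with `Φ₊` nonnegative irreducible with zero diagonal, the column
sums of `Φ` vanish, and `σ > 0`, then the kernel of `σ ▷ Φ` contains a strictly positive
vector, unique up to positive scalar multiples. -/
theorem colScale_kernel_positive {n : ℕ}
    (Φ Φp : Matrix (Fin n) (Fin n) ℝ) (σ : Fin n → ℝ)
    (hΦ : Φ = Φp - 1)
    (hΦp_nonneg : ∀ i j, 0 ≤ Φp i j)
    (hΦp_diag : ∀ i, Φp i i = 0)
    (hΦp_irr : MatIrreducible Φp)
    (hcol : ∀ j, ∑ i, Φ i j = 0)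
    (hσ : ∀ i, 0 < σ i) :
    ∃ x : Fin n → ℝ, (∀ i, 0 < x i) ∧ (colScale σ Φ).mulVec x = 0 ∧
      ∀ y : Fin n → ℝ, (∀ i, 0 < y i) → (colScale σ Φ).mulVec y = 0 →
        ∃ c : ℝ, 0 < c ∧ y = c • x :=
  colScale_kernel_positive_general Φ Φp σ hΦ hΦp_nonneg hΦp_irr hcol hσ
end

section
/- Let A be an n×n real symmetric matrix. Then the Wolkowicz–Styan bound holds: λ_max(A) ≤ tr(A)/n + sqrt((n−1)(tr(A²)/n − tr(A)²/n²)). -/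
open Matrix Finset in
/-- Scalar Wolkowicz–Styan-type bound for a finite family of reals. -/
lemma wolkowicz_styan_key_scalar {n : ℕ} (hn : 0 < n) (μ : Fin n → ℝ) (k : Fin n) :
    μ k ≤ (∑ i, μ i) / n +
      Real.sqrt (((n : ℝ) - 1) * ((∑ i, (μ i)^2) / n - (∑ i, μ i)^2 / ((n : ℝ)^2))) := by
  have hN : (0:ℝ) < (n : ℝ) := by exact_mod_cast hn
  set m : ℝ := (∑ i, μ i) / n with hm
  set d : Fin n → ℝ := fun i => μ i - m with hd
  have hsum : ∑ i, d i = 0 := by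
    simp only [hd, Finset.sum_sub_distrib, Finset.sum_const, Finset.card_univ,
      Fintype.card_fin, nsmul_eq_mul, hm]
    field_simp
    ring
  have hcard : (((Finset.univ : Finset (Fin n)).erase k).card : ℝ) = (n : ℝ) - 1 := by
    rw [Finset.card_erase_of_mem (Finset.mem_univ k), Finset.card_univ, Fintype.card_fin]
    push_cast [Nat.cast_sub hn]
    ring
  have herase : ∑ i ∈ Finset.univ.erase k, d i = - d k := by
    rw [Finset.sum_erase_eq_sub (Finset.mem_univ k), hsum]; ring
  have herase2 : ∑ i ∈ Finset.univ.erase k, d i ^ 2 = (∑ i, d i ^ 2) - d k ^ 2 :=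
    Finset.sum_erase_eq_sub (Finset.mem_univ k)
  have hCS := sq_sum_le_card_mul_sum_sq (s := Finset.univ.erase k) (f := d)
  rw [herase, herase2] at hCS
  have hCS' : (d k) ^ 2 ≤ ((n:ℝ) - 1) * ((∑ i, d i ^ 2) - d k ^ 2) := by
    have : ((-d k) ^ 2 : ℝ) ≤ (((Finset.univ.erase k).card : ℝ)) * ((∑ i, d i ^ 2) - d k ^ 2) := by
      exact_mod_cast hCS
    rw [hcard] at this
    nlinarith [this]
  have hkey : (n:ℝ) * d k ^ 2 ≤ ((n:ℝ) - 1) * ∑ i, d i ^ 2 := by nlinarith [hCS']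
  have hS : ∑ i, d i ^ 2 = ∑ i, (μ i)^2 - (∑ i, μ i)^2 / (n:ℝ) := by
    have he : ∀ i : Fin n, d i ^ 2 = μ i ^ 2 - 2*m*μ i + m^2 := fun i => by rw [hd]; ring
    rw [Finset.sum_congr rfl (fun i _ => he i)]
    rw [Finset.sum_add_distrib, Finset.sum_sub_distrib, ← Finset.mul_sum,
      Finset.sum_const, Finset.card_univ, Fintype.card_fin, nsmul_eq_mul, hm]
    field_simp
    ring
  have hE : ((n:ℝ) - 1) * ((∑ i, (μ i)^2) / n - (∑ i, μ i)^2 / ((n : ℝ)^2))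
      = ((n:ℝ)-1) * (∑ i, d i ^2) / n := by
    rw [hS]; field_simp
  have h1 : d k ^ 2 ≤ ((n:ℝ)-1) * (∑ i, d i ^2) / n := by
    rw [le_div_iff₀ hN]; linarith [hkey]
  have h2 : d k ≤ Real.sqrt (((n:ℝ)-1) * (∑ i, d i ^2) / n) := by
    calc d k ≤ |d k| := le_abs_self _
      _ = Real.sqrt (d k ^ 2) := (Real.sqrt_sq_eq_abs _).symm
      _ ≤ _ := Real.sqrt_le_sqrt h1
  rw [hE]
  have : d k = μ k - m := rfl
  linarith [h2]

open Matrix in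
/-- Wolkowicz–Styan bound: for a real symmetric `n × n` matrix `A`, every (real)
eigenvalue `λ` satisfies `λ ≤ tr(A)/n + sqrt((n−1)(tr(A²)/n − tr(A)²/n²))`. -/
theorem wolkowicz_styan_bound {n : ℕ} (hn : 0 < n)
    (A : Matrix (Fin n) (Fin n) ℝ) (hA : A.IsSymm)
    (lam : ℝ) (v : Fin n → ℝ) (hv : v ≠ 0)
    (heig : A.mulVec v = lam • v) :
    lam ≤ A.trace / n +
      Real.sqrt ((n - 1) * ((A * A).trace / n - (A.trace)^2 / (n^2 : ℝ))) := by
  have hherm : A.IsHermitian := by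
    rw [Matrix.IsHermitian]
    ext i j
    simpa [Matrix.conjTranspose_apply] using (congrFun (congrFun hA j) i).symm
  -- `lam` is in the real spectrum of `A`
  have hdet : (lam • (1 : Matrix (Fin n) (Fin n) ℝ) - A).det = 0 := by
    rw [← Matrix.exists_mulVec_eq_zero_iff]
    refine ⟨v, hv, ?_⟩
    rw [Matrix.sub_mulVec, Matrix.smul_mulVec, Matrix.one_mulVec, heig, sub_self]
  have hspec : lam ∈ spectrum ℝ A := by
    rw [spectrum.mem_iff]
    intro hunit
    rw [Matrix.isUnit_iff_isUnit_det] at hunit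
    rw [Algebra.algebraMap_eq_smul_one] at hunit
    rw [hdet] at hunit
    exact hunit.ne_zero rfl
  obtain ⟨k, hk⟩ := hherm.spectrum_real_eq_range_eigenvalues ▸ hspec
  -- trace identities via the spectral theorem
  set U : Matrix (Fin n) (Fin n) ℝ := (hherm.eigenvectorUnitary : Matrix (Fin n) (Fin n) ℝ) with hU
  have hUU : U * star U = 1 := Matrix.mem_unitaryGroup_iff.mp hherm.eigenvectorUnitary.2
  have hdiag : star U * A * U = Matrix.diagonal hherm.eigenvalues := by
    have := hherm.conjStarAlgAut_star_eigenvectorUnitary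
    simpa [Unitary.conjStarAlgAut_star_apply] using this
  have htr : A.trace = ∑ i, hherm.eigenvalues i := by
    calc A.trace = (U * star U * A).trace := by rw [hUU, Matrix.one_mul]
      _ = (star U * A * U).trace := (Matrix.trace_mul_cycle _ _ _).symm
      _ = ∑ i, hherm.eigenvalues i := by rw [hdiag, Matrix.trace_diagonal]
  have htr2 : (A * A).trace = ∑ i, (hherm.eigenvalues i) ^ 2 := by
    have h2 : star U * (A * A) * U
        = Matrix.diagonal hherm.eigenvalues * Matrix.diagonal hherm.eigenvalues := by
      rw [← hdiag]
      calc star U * (A * A) * U = (star U * A * U) * (star U * A * U) := by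
            rw [Matrix.mul_assoc (star U * A) U _]
            rw [show U * (star U * A * U) = A * U by
              rw [← Matrix.mul_assoc, ← Matrix.mul_assoc, hUU, Matrix.one_mul]]
            noncomm_ring
      _ = _ := rfl
    calc (A * A).trace = (U * star U * (A * A)).trace := by rw [hUU, Matrix.one_mul]
      _ = (star U * (A * A) * U).trace := (Matrix.trace_mul_cycle _ _ _).symm
      _ = ∑ i, (hherm.eigenvalues i) ^ 2 := by
          rw [h2, Matrix.diagonal_mul_diagonal, Matrix.trace_diagonal]
          exact Finset.sum_congr rfl fun i _ => (sq _).symm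
  rw [htr, htr2, ← hk]
  exact wolkowicz_styan_key_scalar hn hherm.eigenvalues k
end

section
/- Let F, V be n×n real matrices where F ≥ 0 entrywise and V is a nonsingular M-matrix (here V = (γ+μ)id + p·diag(σ) is positive diagonal). Then ρ(FV⁻¹) < 1 if and only if all eigenvalues of F − V have strictly negative real part. -/
/-- Spectral radius of a real matrix: the largest modulus of a complex eigenvalue. -/
noncomputable def specRad {n : ℕ} (M : Matrix (Fin n) (Fin n) ℝ) : ℝ :=
  sSup {x : ℝ | ∃ μ : ℂ, ((M.map Complex.ofReal).charpoly).IsRoot μ ∧ x = ‖μ‖}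


open Matrix Polynomial Filter Finset
open scoped ENNReal NNReal

attribute [local instance] Matrix.linftyOpNormedAddCommGroup Matrix.linftyOpNormedRing
  Matrix.linftyOpNormedAlgebra

namespace VdW

noncomputable def matComplete (n : ℕ) : CompleteSpace (Matrix (Fin n) (Fin n) ℂ) :=
  FiniteDimensional.complete ℂ _

attribute [local instance] matComplete

variable {n : ℕ}

lemma charpoly_eval (M : Matrix (Fin n) (Fin n) ℂ) (z : ℂ) :
    M.charpoly.eval z = (z • (1 : Matrix (Fin n) (Fin n) ℂ) - M).det := by
  rw [Matrix.charpoly, _root_.eval_det, matPolyEquiv_charmatrix]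
  simp only [eval_sub, eval_X, eval_C]
  congr 1
  rw [Matrix.smul_one_eq_diagonal]
  rfl

lemma isRoot_iff_det {M : Matrix (Fin n) (Fin n) ℂ} {z : ℂ} :
    M.charpoly.IsRoot z ↔ (z • (1 : Matrix (Fin n) (Fin n) ℂ) - M).det = 0 := by
  rw [Polynomial.IsRoot, charpoly_eval]

lemma isRoot_iff_eigen {M : Matrix (Fin n) (Fin n) ℂ} {z : ℂ} :
    M.charpoly.IsRoot z ↔ ∃ v : Fin n → ℂ, v ≠ 0 ∧ M.mulVec v = z • v := by
  rw [isRoot_iff_det, ← Matrix.exists_mulVec_eq_zero_iff]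
  constructor
  · rintro ⟨v, hv, h⟩
    refine ⟨v, hv, ?_⟩
    rw [Matrix.sub_mulVec, Matrix.smul_mulVec, Matrix.one_mulVec, sub_eq_zero] at h
    exact h.symm
  · rintro ⟨v, hv, h⟩
    refine ⟨v, hv, ?_⟩
    rw [Matrix.sub_mulVec, Matrix.smul_mulVec, Matrix.one_mulVec, sub_eq_zero, h]

lemma mem_spectrum_iff {M : Matrix (Fin n) (Fin n) ℂ} {z : ℂ} :
    z ∈ spectrum ℂ M ↔ M.charpoly.IsRoot z := by
  rw [spectrum.mem_iff, isRoot_iff_det, Algebra.algebraMap_eq_smul_one,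
    Matrix.isUnit_iff_isUnit_det, isUnit_iff_ne_zero, not_ne_iff]

lemma row_sum_le_norm (M : Matrix (Fin n) (Fin n) ℂ) (i : Fin n) :
    ∑ j, ‖M i j‖ ≤ ‖M‖ := by
  rw [Matrix.linfty_opNorm_def]
  have h : (∑ j, ‖M i j‖₊) ≤ (Finset.univ.sup fun i => ∑ j, ‖M i j‖₊) :=
    Finset.le_sup (f := fun i => ∑ j, ‖M i j‖₊) (Finset.mem_univ i)
  calc ∑ j, ‖M i j‖ = ((∑ j, ‖M i j‖₊ : NNReal) : ℝ) := by push_cast; rfl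
    _ ≤ _ := by exact_mod_cast h

lemma norm_le_of_entry_le {M N : Matrix (Fin n) (Fin n) ℂ}
    (h : ∀ i j, ‖M i j‖ ≤ ‖N i j‖) : ‖M‖ ≤ ‖N‖ := by
  rw [Matrix.linfty_opNorm_def]
  have : ∀ i : Fin n, (∑ j, ‖M i j‖₊ : NNReal) ≤ ‖N‖₊ := by
    intro i
    have h1 : ((∑ j, ‖M i j‖₊ : NNReal) : ℝ) ≤ ((∑ j, ‖N i j‖₊ : NNReal) : ℝ) := by
      push_cast
      exact Finset.sum_le_sum fun j _ => h i j
    have h2 : ∑ j, ‖N i j‖ ≤ ‖N‖ := row_sum_le_norm N i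
    have h2' : ((∑ j, ‖N i j‖₊ : NNReal) : ℝ) ≤ (‖N‖₊ : ℝ) := by
      push_cast; simpa using h2
    exact_mod_cast h1.trans h2'
  calc ((Finset.univ.sup fun i => ∑ j, ‖M i j‖₊ : NNReal) : ℝ)
      ≤ (‖N‖₊ : ℝ) := by exact_mod_cast Finset.sup_le fun i _ => this i
    _ = ‖N‖ := rfl

lemma entry_norm_le (M : Matrix (Fin n) (Fin n) ℂ) (i j : Fin n) : ‖M i j‖ ≤ ‖M‖ := by
  refine le_trans ?_ (row_sum_le_norm M i)
  exact Finset.single_le_sum (fun j _ => norm_nonneg _) (Finset.mem_univ j)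

noncomputable def entryCLM (i j : Fin n) : Matrix (Fin n) (Fin n) ℂ →L[ℂ] ℂ :=
  LinearMap.mkContinuous
    { toFun := fun M => M i j
      map_add' := fun _ _ => rfl
      map_smul' := fun _ _ => rfl } 1
    (fun M => by rw [one_mul]; exact entry_norm_le M i j)

@[simp] lemma entryCLM_apply (i j : Fin n) (M : Matrix (Fin n) (Fin n) ℂ) :
    entryCLM i j M = M i j := rfl

lemma map_pow_ofReal (C : Matrix (Fin n) (Fin n) ℝ) (k : ℕ) :
    (C.map Complex.ofReal) ^ k = (C ^ k).map Complex.ofReal := by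
  induction k with
  | zero => simp [Matrix.map_one]
  | succ k ih =>
    rw [pow_succ, pow_succ, ih]
    exact Matrix.map_mul (f := Complex.ofRealHom) |>.symm

lemma pow_entry_nonneg {C : Matrix (Fin n) (Fin n) ℝ} (hC : ∀ i j, 0 ≤ C i j) (k : ℕ) :
    ∀ i j, 0 ≤ (C ^ k) i j := by
  induction k with
  | zero =>
    intro i j
    rw [pow_zero]
    by_cases h : i = j <;> simp [Matrix.one_apply, h]
  | succ k ih =>
    intro i j
    rw [pow_succ, Matrix.mul_apply]
    exact Finset.sum_nonneg fun m _ => mul_nonneg (ih i m) (hC m j)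

lemma subinv_le_spectralRadius (C : Matrix (Fin n) (Fin n) ℝ)
    (hC : ∀ i j, 0 ≤ C i j) (x : Fin n → ℝ) (hx : ∀ i, 0 ≤ x i) (hx0 : x ≠ 0)
    (c : ℝ) (hc : 0 ≤ c) (h : ∀ i, c * x i ≤ ∑ j, C i j * x j) :
    ENNReal.ofReal c ≤ spectralRadius ℂ (C.map Complex.ofReal) := by
  -- iterate the subinvariance
  have hiter : ∀ k i, c ^ k * x i ≤ ∑ j, (C ^ k) i j * x j := by
    intro k
    induction k with
    | zero => intro i; simp [Matrix.one_apply, Finset.sum_ite_eq' (Finset.univ : Finset (Fin n))]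
    | succ k ih =>
      intro i
      have h1 : c ^ (k+1) * x i = c ^ k * (c * x i) := by ring
      have h2 : c ^ k * (c * x i) ≤ c ^ k * ∑ j, C i j * x j :=
        mul_le_mul_of_nonneg_left (h i) (pow_nonneg hc k)
      have h3 : c ^ k * ∑ j, C i j * x j ≤ ∑ j, C i j * (c ^ k * x j) := by
        rw [Finset.mul_sum]
        exact Finset.sum_le_sum fun j _ => by rw [mul_comm (c^k) (C i j * x j), mul_assoc,
          mul_comm (x j) (c ^ k)]
      have h4 : ∑ j, C i j * (c ^ k * x j) ≤ ∑ j, C i j * ∑ m, (C ^ k) j m * x m :=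
        Finset.sum_le_sum fun j _ => mul_le_mul_of_nonneg_left (ih j) (hC i j)
      have h5 : ∑ j, C i j * ∑ m, (C ^ k) j m * x m = ∑ m, (C ^ (k+1)) i m * x m := by
        rw [pow_succ']
        simp_rw [Matrix.mul_apply, Finset.sum_mul, Finset.mul_sum]
        rw [Finset.sum_comm]
        congr 1; ext j; congr 1; ext m; ring
      calc c ^ (k+1) * x i = c ^ k * (c * x i) := h1
        _ ≤ c ^ k * ∑ j, C i j * x j := h2
        _ ≤ ∑ j, C i j * (c ^ k * x j) := h3
        _ ≤ ∑ j, C i j * ∑ m, (C ^ k) j m * x m := h4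
        _ = ∑ m, (C ^ (k+1)) i m * x m := h5
  -- pick index with maximal entry of x
  obtain ⟨j₀, hj₀ne⟩ : ∃ j, x j ≠ 0 := Function.ne_iff.mp hx0
  obtain ⟨i₀, -, hi₀⟩ := Finset.exists_max_image (Finset.univ : Finset (Fin n)) x
    ⟨j₀, Finset.mem_univ j₀⟩
  have hxi₀ : 0 < x i₀ := lt_of_lt_of_le (lt_of_le_of_ne (hx j₀) (Ne.symm hj₀ne))
    (hi₀ j₀ (Finset.mem_univ j₀))
  -- norm lower bound for powers
  have hnorm : ∀ k, c ^ k ≤ ‖(C.map Complex.ofReal) ^ k‖ := by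
    intro k
    have h1 : c ^ k * x i₀ ≤ ∑ j, (C ^ k) i₀ j * x j := hiter k i₀
    have h2 : ∑ j, (C ^ k) i₀ j * x j ≤ ∑ j, (C ^ k) i₀ j * x i₀ :=
      Finset.sum_le_sum fun j _ => mul_le_mul_of_nonneg_left (hi₀ j (Finset.mem_univ j))
        (pow_entry_nonneg hC k i₀ j)
    have h3 : c ^ k ≤ ∑ j, (C ^ k) i₀ j := by
      have := (h1.trans h2)
      rw [← Finset.sum_mul] at this
      exact le_of_mul_le_mul_right (by simpa [mul_comm] using this) hxi₀
    refine h3.trans ?_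
    rw [map_pow_ofReal]
    refine le_trans ?_ (row_sum_le_norm _ i₀)
    apply Finset.sum_le_sum
    intro j _
    rw [Matrix.map_apply, Complex.norm_real]
    exact le_abs_self _
  -- conclude via Gelfand's formula
  have hG := spectrum.pow_nnnorm_pow_one_div_tendsto_nhds_spectralRadius (C.map Complex.ofReal)
  refine ge_of_tendsto hG ?_
  filter_upwards [Filter.eventually_ge_atTop 1] with k hk
  have hk0 : (k : ℝ) ≠ 0 := by positivity
  have h1 : (ENNReal.ofReal c) ^ k ≤ (‖(C.map Complex.ofReal) ^ k‖₊ : ℝ≥0∞) := by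
    rw [← ENNReal.ofReal_pow hc, ← enorm_eq_nnnorm, ← ofReal_norm]
    exact ENNReal.ofReal_le_ofReal (hnorm k)
  calc ENNReal.ofReal c = ((ENNReal.ofReal c) ^ k) ^ (1 / (k:ℝ)) := by
        rw [← ENNReal.rpow_natCast, ← ENNReal.rpow_mul, mul_one_div_cancel hk0,
          ENNReal.rpow_one]
    _ ≤ (‖(C.map Complex.ofReal) ^ k‖₊ : ℝ≥0∞) ^ (1 / (k:ℝ)) :=
        ENNReal.rpow_le_rpow h1 (by positivity)

set_option maxHeartbeats 1000000 in
lemma spectralRadius_isRoot (C : Matrix (Fin n) (Fin n) ℝ) (hC : ∀ i j, 0 ≤ C i j)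
    (hpos : 0 < (spectralRadius ℂ (C.map Complex.ofReal)).toReal) :
    (C.map Complex.ofReal).charpoly.IsRoot
      (((spectralRadius ℂ (C.map Complex.ofReal)).toReal : ℝ) : ℂ) := by
  set Cc := C.map Complex.ofReal with hCc
  set ρ : ℝ := (spectralRadius ℂ Cc).toReal with hρdef
  have hρ0 : 0 < ρ := hpos
  -- the index type is nonempty
  have hn : Nonempty (Fin n) := by
    by_contra h
    haveI : IsEmpty (Fin n) := not_nonempty_iff.mp h
    have h0 : spectralRadius ℂ Cc = 0 := spectrum.SpectralRadius.of_subsingleton Cc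
    rw [hρdef, h0] at hρ0
    simp at hρ0
  haveI : Nonempty (Fin n) := hn
  -- maximal modulus spectral point
  obtain ⟨μ₀, hμ₀mem, hμ₀norm⟩ := spectrum.exists_nnnorm_eq_spectralRadius (a := Cc)
  have habs : ‖μ₀‖ = ρ := by
    rw [hρdef, ← hμ₀norm]
    simp
  by_contra hroot
  have hUnit : IsUnit ((ρ:ℂ) • (1 : Matrix (Fin n) (Fin n) ℂ) - Cc) := by
    rw [Matrix.isUnit_iff_isUnit_det, isUnit_iff_ne_zero]
    intro h0
    exact hroot (isRoot_iff_det.mpr h0)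
  set ψ : ℝ → Matrix (Fin n) (Fin n) ℂ := fun t => (t:ℂ) • 1 - Cc with hψdef
  have hψcont : Continuous ψ := by
    apply Continuous.sub
    · exact (Complex.continuous_ofReal.smul continuous_const)
    · exact continuous_const
  have hcont : ContinuousAt (fun t => Ring.inverse (ψ t)) ρ := by
    have h1 : ContinuousAt Ring.inverse (ψ ρ) := by
      have := NormedRing.inverse_continuousAt hUnit.unit
      rwa [IsUnit.unit_spec] at this
    exact h1.comp hψcont.continuousAt
  set K : ℝ := ‖Ring.inverse (ψ ρ)‖ + 1 with hKdef
  have hK1 : 1 ≤ K := by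
    have := norm_nonneg (Ring.inverse (ψ ρ)); linarith
  have hev : ∀ᶠ t in nhds ρ, ‖Ring.inverse (ψ t)‖ < K := by
    have h2 : Filter.Tendsto (fun t => ‖Ring.inverse (ψ t)‖) (nhds ρ)
        (nhds ‖Ring.inverse (ψ ρ)‖) := hcont.norm
    exact h2.eventually_lt_const (by linarith)
  obtain ⟨δ, hδ0, hδK⟩ := Metric.eventually_nhds_iff.mp hev
  set ε : ℝ := min δ (1/(K+1)) / 2 with hεdef
  have hε0 : 0 < ε := by
    have : 0 < 1/(K+1) := by positivity
    have := lt_min hδ0 this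
    positivity
  have hεδ : ε < δ := by
    have h1 : ε ≤ δ / 2 := by
      rw [hεdef]
      have := min_le_left δ (1/(K+1))
      linarith
    linarith
  have hεK : ε * K < 1 := by
    have h1 : ε ≤ (1/(K+1)) / 2 := by
      rw [hεdef]
      have := min_le_right δ (1/(K+1))
      linarith
    have hK0 : 0 < K + 1 := by linarith
    have h2 : ε * K ≤ (1/(K+1))/2 * K := mul_le_mul_of_nonneg_right h1 (by linarith)
    have h3 : (1/(K+1))/2 * K < 1 := by
      rw [div_mul_eq_mul_div, div_mul_eq_mul_div, one_mul, div_div]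
      rw [div_lt_one (by linarith)]
      linarith
    exact lt_of_le_of_lt h2 h3
  set r : ℝ := ρ + ε with hrdef
  have hρr : ρ < r := by rw [hrdef]; linarith
  have hr0 : 0 < r := by linarith
  set r' : ℝ := (ρ + r)/2 with hr'def
  have hρr' : ρ < r' := by rw [hr'def]; linarith
  have hr'r : r' < r := by rw [hr'def]; linarith
  have hr'0 : 0 < r' := by linarith
  -- eventual norm bound on powers from Gelfand's formula
  have hsrfin : spectralRadius ℂ Cc = ENNReal.ofReal ρ := by
    rw [← hμ₀norm, ← habs, ofReal_norm, enorm_eq_nnnorm]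
  have hevk : ∀ᶠ k in atTop, ‖Cc ^ k‖ ≤ r' ^ k := by
    have h1 : spectralRadius ℂ Cc < ENNReal.ofReal r' := by
      rw [hsrfin]
      exact ENNReal.ofReal_lt_ofReal_iff_of_nonneg hρ0.le |>.mpr hρr'
    have h2 := spectrum.pow_nnnorm_pow_one_div_tendsto_nhds_spectralRadius Cc
    filter_upwards [h2.eventually_lt_const h1, eventually_ge_atTop 1] with k hk hk1
    have hk0 : (k:ℝ) ≠ 0 := by positivity
    have h4 : (‖Cc ^ k‖₊ : ℝ≥0∞) ≤ (ENNReal.ofReal r') ^ k := by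
      have h5 := ENNReal.rpow_le_rpow hk.le (by positivity : (0:ℝ) ≤ (k:ℝ))
      rwa [← ENNReal.rpow_mul, one_div_mul_cancel hk0, ENNReal.rpow_one,
        ENNReal.rpow_natCast] at h5
    rw [← ENNReal.ofReal_pow hr'0.le, ← enorm_eq_nnnorm, ← ofReal_norm] at h4
    exact (ENNReal.ofReal_le_ofReal_iff (by positivity)).mp h4
  -- summability of the resolvent series
  have hsummN : Summable (fun k : ℕ => ‖Cc ^ k‖ * r⁻¹ ^ (k+1)) := by
    obtain ⟨N₀, hN₀⟩ := eventually_atTop.mp hevk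
    have hr1 : r'/r < 1 := (div_lt_one hr0).mpr hr'r
    have hgeo : Summable (fun k : ℕ => r⁻¹ * (r'/r) ^ (k + N₀)) :=
      (summable_nat_add_iff N₀).mpr ((summable_geometric_of_lt_one (by positivity) hr1).mul_left r⁻¹)
    rw [← summable_nat_add_iff N₀]
    refine Summable.of_nonneg_of_le (fun k => by positivity) (fun k => ?_) hgeo
    have h1 : ‖Cc ^ (k+N₀)‖ ≤ r' ^ (k+N₀) := hN₀ _ (Nat.le_add_left _ _)
    calc ‖Cc ^ (k+N₀)‖ * r⁻¹ ^ (k+N₀+1)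
        ≤ r' ^ (k+N₀) * r⁻¹ ^ (k+N₀+1) := by
          apply mul_le_mul_of_nonneg_right h1 (by positivity)
      _ = r⁻¹ * (r'/r) ^ (k + N₀) := by
          rw [div_eq_mul_inv, mul_pow, pow_succ]
          ring
  have hsum : ∀ z : ℂ, ‖z‖ = r → Summable (fun k : ℕ => (z⁻¹) ^ (k+1) • Cc ^ k) := by
    intro z hz
    apply Summable.of_norm
    have : ∀ k : ℕ, ‖(z⁻¹) ^ (k+1) • Cc ^ k‖ = ‖Cc ^ k‖ * r⁻¹ ^ (k+1) := by
      intro k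
      rw [norm_smul, norm_pow, norm_inv, hz, mul_comm]
    rw [funext this]
    exact hsummN
  set S : ℂ → Matrix (Fin n) (Fin n) ℂ := fun z => ∑' k : ℕ, (z⁻¹) ^ (k+1) • Cc ^ k with hSdef
  -- the series sums to the inverse of the resolvent
  have hinv : ∀ z : ℂ, ‖z‖ = r → (z • (1 : Matrix (Fin n) (Fin n) ℂ) - Cc) * S z = 1 := by
    intro z hz
    have hz0 : z ≠ 0 := by
      intro h; rw [h, norm_zero] at hz; exact (ne_of_gt hr0) hz.symm
    set a : ℕ → Matrix (Fin n) (Fin n) ℂ := fun k => (z⁻¹) ^ k • Cc ^ k with hadef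
    have hterm : ∀ k : ℕ, (z • (1 : Matrix (Fin n) (Fin n) ℂ) - Cc) * ((z⁻¹) ^ (k+1) • Cc ^ k)
        = a k - a (k+1) := by
      intro k
      have hzz : z * z⁻¹ ^ (k+1) = z⁻¹ ^ k := by
        calc z * z⁻¹ ^ (k+1) = (z * z⁻¹) * z⁻¹ ^ k := by rw [pow_succ]; ring
          _ = z⁻¹ ^ k := by rw [mul_inv_cancel₀ hz0, one_mul]
      rw [hadef]
      simp only [sub_mul, Matrix.smul_mul, Matrix.one_mul, mul_smul_comm, smul_smul]
      rw [smul_sub, smul_smul, mul_comm, hzz, ← pow_succ']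
    have hmul : HasSum (fun k => (z • (1 : Matrix (Fin n) (Fin n) ℂ) - Cc)
        * ((z⁻¹) ^ (k+1) • Cc ^ k)) ((z • (1 : Matrix (Fin n) (Fin n) ℂ) - Cc) * S z) :=
      (hsum z hz).hasSum.mul_left _
    rw [funext hterm] at hmul
    have ha0 : a 0 = 1 := by simp [hadef]
    have haK : Filter.Tendsto a atTop (nhds 0) := by
      have hb : Filter.Tendsto (fun k : ℕ => (r'/r) ^ k) atTop (nhds 0) :=
        tendsto_pow_atTop_nhds_zero_of_lt_one (by positivity) ((div_lt_one hr0).mpr hr'r)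
      refine squeeze_zero_norm' ?_ hb
      filter_upwards [hevk] with k hk
      have h6 : ‖(z⁻¹) ^ k • Cc ^ k‖ = ‖Cc ^ k‖ * r⁻¹ ^ k := by
        rw [norm_smul, norm_pow, norm_inv, hz, mul_comm]
      rw [hadef]
      simp only []
      rw [h6, div_eq_mul_inv, mul_pow]
      exact mul_le_mul_of_nonneg_right hk (by positivity)
    have hpartial : Filter.Tendsto (fun K => ∑ k ∈ Finset.range K, (a k - a (k+1)))
        atTop (nhds (a 0 - 0)) := by
      have heq : ∀ K : ℕ, ∑ k ∈ Finset.range K, (a k - a (k+1)) = a 0 - a K := by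
        intro K
        exact Finset.sum_range_sub' a K
      rw [funext heq]
      exact Filter.Tendsto.sub tendsto_const_nhds haK
    have := hmul.tendsto_sum_nat
    have huniq := tendsto_nhds_unique this hpartial
    rw [huniq, ha0, sub_zero]
  -- entrywise sums
  have hSentry : ∀ z : ℂ, ‖z‖ = r → ∀ i j, HasSum
      (fun k : ℕ => (z⁻¹) ^ (k+1) * (((C ^ k) i j : ℝ) : ℂ)) (S z i j) := by
    intro z hz i j
    have h1 := (entryCLM i j).hasSum (hsum z hz).hasSum
    have h2 : ∀ k : ℕ, entryCLM i j ((z⁻¹) ^ (k+1) • Cc ^ k)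
        = (z⁻¹) ^ (k+1) * (((C ^ k) i j : ℝ) : ℂ) := by
      intro k
      rw [entryCLM_apply, Matrix.smul_apply, smul_eq_mul, hCc, map_pow_ofReal,
        Matrix.map_apply]
    rw [funext h2] at h1
    exact h1
  -- the real comparison series
  set g : Fin n → Fin n → ℕ → ℝ := fun i j k => r⁻¹ ^ (k+1) * (C ^ k) i j with hgdef
  have hgsum : ∀ i j, Summable (g i j) := by
    intro i j
    refine Summable.of_nonneg_of_le (fun k => ?_) (fun k => ?_) hsummN
    · exact mul_nonneg (by positivity) (pow_entry_nonneg hC k i j)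
    · rw [hgdef]
      have h1 : (C ^ k) i j ≤ ‖Cc ^ k‖ := by
        have h2 : ‖(Cc ^ k) i j‖ ≤ ‖Cc ^ k‖ := entry_norm_le _ i j
        have hpe : (Cc ^ k) i j = (((C ^ k) i j : ℝ) : ℂ) := by
          rw [hCc, map_pow_ofReal, Matrix.map_apply]
        rw [hpe, Complex.norm_real, Real.norm_eq_abs] at h2
        exact (le_abs_self _).trans h2
      calc r⁻¹ ^ (k+1) * (C ^ k) i j ≤ r⁻¹ ^ (k+1) * ‖Cc ^ k‖ :=
            mul_le_mul_of_nonneg_left h1 (by positivity)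
        _ = ‖Cc ^ k‖ * r⁻¹ ^ (k+1) := mul_comm _ _
  have hrr : ‖((r:ℝ):ℂ)‖ = r := by
    rw [Complex.norm_real, Real.norm_eq_abs, abs_of_pos hr0]
  have hSr_entry : ∀ i j, S ((r:ℝ):ℂ) i j = ((∑' k, g i j k : ℝ) : ℂ) := by
    intro i j
    have h1 := hSentry ((r:ℝ):ℂ) hrr i j
    have h2 : HasSum (fun k => ((g i j k : ℝ) : ℂ)) ((∑' k, g i j k : ℝ) : ℂ) :=
      Complex.ofRealCLM.hasSum (hgsum i j).hasSum
    have h3 : ∀ k : ℕ, ((g i j k : ℝ) : ℂ) = (((r:ℝ):ℂ)⁻¹) ^ (k+1) * (((C ^ k) i j : ℝ) : ℂ) := by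
      intro k
      rw [hgdef]
      push_cast
      ring
    rw [funext h3] at h2
    exact h1.unique h2
  -- entrywise domination of the resolvent series
  have hdom : ∀ z : ℂ, ‖z‖ = r → ∀ i j, ‖S z i j‖ ≤ ‖S ((r:ℝ):ℂ) i j‖ := by
    intro z hz i j
    have hz0 : z ≠ 0 := by
      intro h; rw [h, norm_zero] at hz; exact (ne_of_gt hr0) hz.symm
    have h1 : ∀ k : ℕ, ‖(z⁻¹) ^ (k+1) * (((C ^ k) i j : ℝ) : ℂ)‖ = g i j k := by
      intro k
      rw [norm_mul, norm_pow, norm_inv, hz, Complex.norm_real, Real.norm_eq_abs,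
        abs_of_nonneg (pow_entry_nonneg hC k i j), hgdef]
    have h2 : ‖S z i j‖ ≤ ∑' k, ‖(z⁻¹) ^ (k+1) * (((C ^ k) i j : ℝ) : ℂ)‖ := by
      rw [← (hSentry z hz i j).tsum_eq]
      exact norm_tsum_le_tsum_norm (by rw [funext h1]; exact hgsum i j)
    rw [funext h1] at h2
    rw [hSr_entry i j, Complex.norm_real, Real.norm_eq_abs,
      abs_of_nonneg (tsum_nonneg (fun k => mul_nonneg (by positivity)
        (pow_entry_nonneg hC k i j)))]
    exact h2
  have hSz_le : ∀ z : ℂ, ‖z‖ = r → ‖S z‖ ≤ ‖S ((r:ℝ):ℂ)‖ := by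
    intro z hz
    exact norm_le_of_entry_le (hdom z hz)
  -- identify `S r` with `Ring.inverse (ψ r)`
  have hSr_eq : Ring.inverse (ψ r) = S ((r:ℝ):ℂ) := by
    have h1 := hinv ((r:ℝ):ℂ) hrr
    have h2 : S ((r:ℝ):ℂ) * (((r:ℝ):ℂ) • 1 - Cc) = 1 := mul_eq_one_comm.mp h1
    exact Ring.inverse_unit ⟨ψ r, S ((r:ℝ):ℂ), h1, h2⟩
  have hSrK : ‖S ((r:ℝ):ℂ)‖ ≤ K := by
    rw [← hSr_eq]
    have : dist r ρ < δ := by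
      rw [Real.dist_eq, hrdef, add_sub_cancel_left, abs_of_pos hε0]
      exact hεδ
    exact (hδK this).le
  -- the contradiction point on the circle of radius r
  set z₀ : ℂ := ((r/ρ : ℝ) : ℂ) * μ₀ with hz₀def
  have hz₀ : ‖z₀‖ = r := by
    rw [hz₀def, norm_mul, Complex.norm_real, Real.norm_eq_abs,
      abs_of_pos (by positivity : (0:ℝ) < r/ρ), habs]
    field_simp
  have hw : ‖z₀ - μ₀‖ = ε := by
    have h1 : z₀ - μ₀ = (((r/ρ - 1 : ℝ)):ℂ) * μ₀ := by
      rw [hz₀def]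
      push_cast
      ring
    rw [h1, norm_mul, Complex.norm_real, Real.norm_eq_abs, habs,
      abs_of_nonneg (by rw [le_sub_iff_add_le, zero_add, le_div_iff₀ hρ0, one_mul]; exact hρr.le)]
    rw [sub_mul, div_mul_cancel₀ _ (ne_of_gt hρ0), one_mul, hrdef]
    ring
  have ht : ‖(z₀ - μ₀) • S z₀‖ < 1 := by
    rw [norm_smul, hw]
    calc ε * ‖S z₀‖ ≤ ε * K := by
          apply mul_le_mul_of_nonneg_left _ hε0.le
          exact (hSz_le z₀ hz₀).trans hSrK
      _ < 1 := hεK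
  have hU1 : IsUnit (z₀ • (1 : Matrix (Fin n) (Fin n) ℂ) - Cc) := by
    have h1 := hinv z₀ hz₀
    exact ⟨⟨_, S z₀, h1, mul_eq_one_comm.mp h1⟩, rfl⟩
  have hU2 : IsUnit (1 - (z₀ - μ₀) • S z₀) := (Units.oneSub _ ht).isUnit
  have heq : (z₀ • (1 : Matrix (Fin n) (Fin n) ℂ) - Cc) * (1 - (z₀ - μ₀) • S z₀)
      = μ₀ • 1 - Cc := by
    rw [mul_sub, mul_one, mul_smul_comm, hinv z₀ hz₀, sub_smul]
    abel
  have hfinal : IsUnit (μ₀ • (1 : Matrix (Fin n) (Fin n) ℂ) - Cc) := heq ▸ hU1.mul hU2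
  refine (spectrum.mem_iff.mp hμ₀mem) ?_
  rwa [Algebra.algebraMap_eq_smul_one]

lemma eigen_entry {M : Matrix (Fin n) (Fin n) ℝ} {v : Fin n → ℂ} {μ : ℂ}
    (hv : (M.map Complex.ofReal).mulVec v = μ • v) (i : Fin n) :
    ∑ j, ((M i j : ℝ):ℂ) * v j = μ * v i := by
  have h := congrFun hv i
  simpa [Matrix.mulVec, dotProduct, Matrix.map_apply] using h

lemma eigen_sub_diag {F : Matrix (Fin n) (Fin n) ℝ} {d : Fin n → ℝ} {v : Fin n → ℂ} {μ : ℂ}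
    (hv : ((F - Matrix.diagonal d).map Complex.ofReal).mulVec v = μ • v) (i : Fin n) :
    ∑ j, ((F i j : ℝ):ℂ) * v j = (μ + (d i:ℂ)) * v i := by
  have h1 : ∑ j, (((F - Matrix.diagonal d) i j : ℝ):ℂ) * v j = μ * v i := eigen_entry hv i
  have h2 : ∀ j, (((F - Matrix.diagonal d) i j : ℝ):ℂ) * v j
      = ((F i j:ℝ):ℂ) * v j - ((Matrix.diagonal d i j:ℝ):ℂ) * v j := by
    intro j
    rw [Matrix.sub_apply]
    push_cast
    ring
  rw [Finset.sum_congr rfl (fun j _ => h2 j), Finset.sum_sub_distrib] at h1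
  have h3 : ∑ j, ((Matrix.diagonal d i j:ℝ):ℂ) * v j = (d i:ℂ) * v i := by
    rw [Finset.sum_eq_single i]
    · rw [Matrix.diagonal_apply_eq]
    · intro b _ hb
      rw [Matrix.diagonal_apply_ne d (Ne.symm hb)]
      simp
    · intro hi; exact absurd (Finset.mem_univ i) hi
  rw [h3] at h1
  linear_combination h1

end VdW



/-- Van den Driessche–Watmough equivalence: for `F ≥ 0` entrywise and `V` a positive
diagonal matrix, `ρ(F V⁻¹) < 1` iff all eigenvalues of `F − V` have negative real part. -/
theorem vdD_Watmough_equivalence {n : ℕ}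
    (F : Matrix (Fin n) (Fin n) ℝ) (d : Fin n → ℝ)
    (hF : ∀ i j, 0 ≤ F i j) (hd : ∀ i, 0 < d i) :
    specRad (F * (Matrix.diagonal d)⁻¹) < 1 ↔
      ∀ μ : ℂ, (((F - Matrix.diagonal d).map Complex.ofReal).charpoly).IsRoot μ →
        μ.re < 0 := by
  classical
  set A := F * (Matrix.diagonal d)⁻¹ with hAdef
  have hdinv : (Matrix.diagonal d)⁻¹ = Matrix.diagonal (fun j => (d j)⁻¹) := by
    apply Matrix.inv_eq_right_inv
    rw [Matrix.diagonal_mul_diagonal]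
    have h1 : (fun j => d j * (d j)⁻¹) = fun _ => (1:ℝ) :=
      funext fun j => mul_inv_cancel₀ (ne_of_gt (hd j))
    rw [h1, Matrix.diagonal_one]
  have hAentry : ∀ i j, A i j = F i j * (d j)⁻¹ := by
    intro i j
    rw [hAdef, hdinv, Matrix.mul_diagonal]
  have hA0 : ∀ i j, 0 ≤ A i j := fun i j => by
    rw [hAentry]
    exact mul_nonneg (hF i j) (inv_nonneg.mpr (hd j).le)
  have hspec : specRad A = sSup {x : ℝ | ∃ μ : ℂ,
      ((A.map Complex.ofReal).charpoly).IsRoot μ ∧ x = ‖μ‖} := rfl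
  set Sset := {x : ℝ | ∃ μ : ℂ,
      ((A.map Complex.ofReal).charpoly).IsRoot μ ∧ x = ‖μ‖} with hSsetdef
  have hfin : Sset.Finite := by
    have h1 : {μ : ℂ | ((A.map Complex.ofReal).charpoly).IsRoot μ}.Finite :=
      Polynomial.finite_setOf_isRoot (Matrix.charpoly_monic _).ne_zero
    apply (h1.image (fun μ => ‖μ‖)).subset
    rintro x ⟨μ, hμ, rfl⟩
    exact ⟨μ, hμ, rfl⟩
  have hbdd : BddAbove Sset := hfin.bddAbove
  constructor
  · -- small spectral radius implies stability
    intro hlt μ hroot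
    by_contra hre
    push_neg at hre
    obtain ⟨v, hv0, hv⟩ := VdW.isRoot_iff_eigen.mp hroot
    set y : Fin n → ℝ := fun j => d j * ‖v j‖ with hydef
    have hy0 : ∀ j, 0 ≤ y j := fun j => mul_nonneg (hd j).le (norm_nonneg _)
    have hyne : y ≠ 0 := by
      obtain ⟨j, hj⟩ := Function.ne_iff.mp hv0
      intro h
      have h1 := congrFun h j
      rw [hydef] at h1
      simp only [Pi.zero_apply] at h1
      rcases mul_eq_zero.mp h1 with h2 | h2
      · exact absurd h2 (ne_of_gt (hd j))
      · exact hj (norm_eq_zero.mp h2)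
    have hsub : ∀ i, 1 * y i ≤ ∑ j, A i j * y j := by
      intro i
      rw [one_mul]
      have hAy : ∑ j, A i j * y j = ∑ j, F i j * ‖v j‖ := by
        apply Finset.sum_congr rfl
        intro j _
        rw [hAentry i j, hydef]
        have hdj : (d j)⁻¹ * d j = 1 := inv_mul_cancel₀ (ne_of_gt (hd j))
        calc F i j * (d j)⁻¹ * (d j * ‖v j‖)
            = F i j * ‖v j‖ * ((d j)⁻¹ * d j) := by ring
          _ = F i j * ‖v j‖ := by rw [hdj, mul_one]
      rw [hAy]
      have he := VdW.eigen_sub_diag hv i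
      have h1 : ‖(μ + (d i:ℂ)) * v i‖ ≤ ∑ j, F i j * ‖v j‖ := by
        rw [← he]
        refine le_trans (norm_sum_le _ _) ?_
        apply Finset.sum_le_sum
        intro j _
        rw [norm_mul, Complex.norm_real, Real.norm_eq_abs, abs_of_nonneg (hF i j)]
      have h2 : d i * ‖v i‖ ≤ ‖(μ + (d i:ℂ)) * v i‖ := by
        rw [norm_mul]
        apply mul_le_mul_of_nonneg_right _ (norm_nonneg _)
        calc d i ≤ μ.re + d i := by linarith
          _ = (μ + (d i:ℂ)).re := by simp
          _ ≤ ‖μ + (d i:ℂ)‖ := Complex.re_le_norm _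
      rw [hydef]
      exact h2.trans h1
    have h1 := VdW.subinv_le_spectralRadius A hA0 y hy0 hyne 1 zero_le_one hsub
    rw [ENNReal.ofReal_one] at h1
    have h2 : spectralRadius ℂ (A.map Complex.ofReal) ≤ ENNReal.ofReal (specRad A) := by
      rw [spectralRadius]
      refine iSup₂_le fun z hz => ?_
      have hzroot := VdW.mem_spectrum_iff.mp hz
      have hzS : ‖z‖ ∈ Sset := ⟨z, hzroot, rfl⟩
      have hle : ‖z‖ ≤ specRad A := by
        rw [hspec]
        exact le_csSup hbdd hzS
      calc (‖z‖₊ : ℝ≥0∞) = ENNReal.ofReal (‖z‖) := by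
            rw [ofReal_norm, enorm_eq_nnnorm]
        _ ≤ _ := ENNReal.ofReal_le_ofReal hle
    have h3 : (1:ℝ≥0∞) ≤ ENNReal.ofReal (specRad A) := h1.trans h2
    rw [ENNReal.one_le_ofReal] at h3
    linarith
  · -- stability implies small spectral radius
    intro hall
    by_contra hge
    push_neg at hge
    have hne : Sset.Nonempty := by
      by_contra h
      rw [Set.not_nonempty_iff_eq_empty] at h
      rw [hspec, h, Real.sSup_empty] at hge
      linarith
    have hmem : specRad A ∈ Sset := by
      rw [hspec]
      exact hne.csSup_mem hfin
    obtain ⟨μ₀, hμ₀root, hμ₀abs⟩ := hmem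
    obtain ⟨v, hv0, hv⟩ := VdW.isRoot_iff_eigen.mp hμ₀root
    obtain ⟨j₀, hj₀⟩ := Function.ne_iff.mp hv0
    haveI : Nonempty (Fin n) := ⟨j₀⟩
    set y : Fin n → ℝ := fun j => ‖v j‖ with hydef
    have hy0 : ∀ j, 0 ≤ y j := fun j => norm_nonneg _
    have hyne : y ≠ 0 := by
      intro h
      have h1 := congrFun h j₀
      rw [hydef] at h1
      simp only [Pi.zero_apply] at h1
      exact hj₀ (norm_eq_zero.mp h1)
    have habs1 : 1 ≤ ‖μ₀‖ := by rw [← hμ₀abs]; exact hge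
    have hsuby : ∀ i, y i ≤ ∑ j, A i j * y j := by
      intro i
      have he := VdW.eigen_entry hv i
      have h1 : ‖μ₀ * v i‖ ≤ ∑ j, A i j * y j := by
        rw [← he]
        refine le_trans (norm_sum_le _ _) ?_
        apply Finset.sum_le_sum
        intro j _
        rw [norm_mul, Complex.norm_real, Real.norm_eq_abs, abs_of_nonneg (hA0 i j), hydef]
      refine le_trans ?_ h1
      rw [norm_mul, hydef]
      calc ‖v i‖ = 1 * ‖v i‖ := (one_mul _).symm
        _ ≤ ‖μ₀‖ * ‖v i‖ :=
            mul_le_mul_of_nonneg_right habs1 (norm_nonneg _)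
    set x : Fin n → ℝ := fun j => (d j)⁻¹ * y j with hxdef
    have hx0 : ∀ j, 0 ≤ x j := fun j => mul_nonneg (inv_nonneg.mpr (hd j).le) (hy0 j)
    have hxne : x ≠ 0 := by
      intro h
      apply hyne
      funext j
      have h1 := congrFun h j
      rw [hxdef] at h1
      simp only [Pi.zero_apply] at h1
      rcases mul_eq_zero.mp h1 with h2 | h2
      · exact absurd h2 (inv_ne_zero (ne_of_gt (hd j)))
      · simpa using h2
    have hFx : ∀ i, d i * x i ≤ ∑ j, F i j * x j := by
      intro i
      have h1 : ∑ j, F i j * x j = ∑ j, A i j * y j := by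
        apply Finset.sum_congr rfl
        intro j _
        rw [hAentry i j, hxdef]
        ring
      have h2 : d i * x i = y i := by
        rw [hxdef, ← mul_assoc, mul_inv_cancel₀ (ne_of_gt (hd i)), one_mul]
      rw [h1, h2]
      exact hsuby i
    set c : ℝ := 1 + ∑ i, d i with hcdef
    have hdsum : 0 ≤ ∑ i, d i := Finset.sum_nonneg fun i _ => (hd i).le
    have hc1 : 1 ≤ c := by rw [hcdef]; linarith
    have hcd : ∀ i, d i ≤ c := by
      intro i
      have := Finset.single_le_sum (fun i _ => (hd i).le) (Finset.mem_univ i)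
      rw [hcdef]
      linarith
    set C0 : Matrix (Fin n) (Fin n) ℝ := F - Matrix.diagonal d + c • 1 with hC0def
    have hC0entry : ∀ i j, C0 i j
        = F i j - Matrix.diagonal d i j + c * (if i = j then 1 else 0) := by
      intro i j
      rw [hC0def]
      simp [Matrix.add_apply, Matrix.sub_apply, Matrix.smul_apply, Matrix.one_apply,
        smul_eq_mul]
    have hC0nn : ∀ i j, 0 ≤ C0 i j := by
      intro i j
      rw [hC0entry]
      by_cases h : i = j
      · subst h
        rw [Matrix.diagonal_apply_eq, if_pos rfl]
        have := hcd i
        have := hF i i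
        linarith
      · rw [Matrix.diagonal_apply_ne d h, if_neg h]
        simpa using hF i j
    have hsubC : ∀ i, c * x i ≤ ∑ j, C0 i j * x j := by
      intro i
      have hsplit : ∑ j, C0 i j * x j
          = (∑ j, F i j * x j) - d i * x i + c * x i := by
        have h1 : ∀ j, C0 i j * x j = F i j * x j - Matrix.diagonal d i j * x j
            + c * ((if i = j then 1 else 0) * x j) := by
          intro j
          rw [hC0entry]
          ring
        rw [Finset.sum_congr rfl (fun j _ => h1 j)]
        rw [Finset.sum_add_distrib, Finset.sum_sub_distrib, ← Finset.mul_sum]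
        congr 1
        · congr 1
          rw [Finset.sum_eq_single i]
          · rw [Matrix.diagonal_apply_eq]
          · intro b _ hb
            rw [Matrix.diagonal_apply_ne d (Ne.symm hb), zero_mul]
          · intro hi; exact absurd (Finset.mem_univ i) hi
        · congr 1
          rw [Finset.sum_eq_single i]
          · rw [if_pos rfl, one_mul]
          · intro b _ hb
            rw [if_neg (Ne.symm hb), zero_mul]
          · intro hi; exact absurd (Finset.mem_univ i) hi
      rw [hsplit]
      have := hFx i
      linarith
    have hKey := VdW.subinv_le_spectralRadius C0 hC0nn x hx0 hxne c (by linarith) hsubC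
    have hsrfin : spectralRadius ℂ (C0.map Complex.ofReal) ≠ ⊤ :=
      ne_top_of_le_ne_top ENNReal.coe_ne_top (spectrum.spectralRadius_le_nnnorm (𝕜 := ℂ) _)
    have hρc : c ≤ (spectralRadius ℂ (C0.map Complex.ofReal)).toReal := by
      have h1 := ENNReal.toReal_mono hsrfin hKey
      rwa [ENNReal.toReal_ofReal (by linarith)] at h1
    have hρpos : 0 < (spectralRadius ℂ (C0.map Complex.ofReal)).toReal := by linarith
    have hroot := VdW.spectralRadius_isRoot C0 hC0nn hρpos
    set ρC : ℝ := (spectralRadius ℂ (C0.map Complex.ofReal)).toReal with hρCdef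
    have hshift : (((F - Matrix.diagonal d).map Complex.ofReal).charpoly).IsRoot
        ((ρC - c : ℝ) : ℂ) := by
      rw [VdW.isRoot_iff_det]
      rw [VdW.isRoot_iff_det] at hroot
      have hmap : C0.map Complex.ofReal
          = (F - Matrix.diagonal d).map Complex.ofReal + (c:ℂ) • 1 := by
        ext i j
        simp only [Matrix.map_apply, Matrix.add_apply, Matrix.smul_apply, Matrix.one_apply,
          smul_eq_mul, mul_ite, mul_one, mul_zero, hC0def, Matrix.sub_apply]
        by_cases h : i = j
        · subst h
          simp [Matrix.diagonal_apply_eq]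
        · simp [h, Matrix.diagonal_apply_ne d h]
      have hmat : ((ρC - c : ℝ):ℂ) • (1 : Matrix (Fin n) (Fin n) ℂ)
          - (F - Matrix.diagonal d).map Complex.ofReal
          = ((ρC : ℝ):ℂ) • 1 - C0.map Complex.ofReal := by
        rw [hmap]
        push_cast
        rw [sub_smul]
        abel
      rw [hmat]
      exact hroot
    have hcon := hall _ hshift
    rw [Complex.ofReal_re] at hcon
    linarith
end

section
/- Let Φ be an n×n matrix with nonnegative off-diagonal entries, diagonal entries −1, and zero column sums, and let S, S* ∈ ℝ^n be strictly positive vectors with (σ▷Φ)S* = 0 for strictly positive σ ∈ ℝ^n. Then ⟨(σ▷Φ)S, diag(S)⁻¹S*⟩ ≥ 0, i.e., Σ_{i,j} σ_jΦ_{ij}S_j · (S*_i/S_i) ≥ 0. -/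
theorem Real.one_add_log_sub_log_le_div {u v : ℝ} (hu : 0 < u) (hv : 0 < v) :
    1 + (Real.log u - Real.log v) ≤ u / v := by
  rw [← Real.log_div hu.ne' hv.ne']
  linarith [Real.log_le_sub_one_of_pos (div_pos hu hv)]

namespace Matrix

variable {ι : Type*} [Fintype ι]

theorem sum_sum_mul_one_add_sub_eq_zero (A : Matrix ι ι ℝ) (x g : ι → ℝ)
    (hcol : ∀ j, ∑ i, A i j = 0) (hker : A *ᵥ x = 0) :
    ∑ i, ∑ j, A i j * (x j * (1 + (g j - g i))) = 0 := by
  have hsplit : ∀ i j, A i j * (x j * (1 + (g j - g i)))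
      = A i j * (x j * (1 + g j)) - g i * (A i j * x j) := fun i j => by ring
  have hcols : ∑ i, ∑ j, A i j * (x j * (1 + g j)) = 0 := by
    rw [Finset.sum_comm]
    simp only [← Finset.sum_mul, hcol, zero_mul, Finset.sum_const_zero]
  have hrows : ∑ i, ∑ j, g i * (A i j * x j) = 0 := by
    have hrow : ∀ i, ∑ j, A i j * x j = 0 := fun i => congrFun hker i
    simp only [← Finset.mul_sum, hrow, mul_zero, Finset.sum_const_zero]
  simp only [hsplit, Finset.sum_sub_distrib, hcols, hrows, sub_zero]

theorem sum_mulVec_mul_div_nonneg (A : Matrix ι ι ℝ) (x y : ι → ℝ)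
    (hoff : ∀ i j, i ≠ j → 0 ≤ A i j) (hcol : ∀ j, ∑ i, A i j = 0)
    (hx : ∀ i, 0 < x i) (hy : ∀ i, 0 < y i) (hker : A *ᵥ x = 0) :
    0 ≤ ∑ i, (A *ᵥ y) i * (x i / y i) := by
  set g : ι → ℝ := fun k => Real.log (y k / x k)
  have hterm : ∀ i j, A i j * (x j * (1 + (g j - g i))) ≤ A i j * (y j * (x i / y i)) := by
    intro i j
    rcases eq_or_ne i j with rfl | hij
    · rw [sub_self, add_zero, mul_one, mul_div_cancel₀ _ (hy i).ne']
    · have hlog := Real.one_add_log_sub_log_le_div (div_pos (hy j) (hx j)) (div_pos (hy i) (hx i))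
      calc A i j * (x j * (1 + (g j - g i)))
          ≤ A i j * (x j * ((y j / x j) / (y i / x i))) := by
            gcongr
            exacts [hoff i j hij, (hx j).le]
        _ = A i j * (y j * (x i / y i)) := by field_simp [(hx j).ne']
  calc (0 : ℝ) = ∑ i, ∑ j, A i j * (x j * (1 + (g j - g i))) :=
        (sum_sum_mul_one_add_sub_eq_zero A x g hcol hker).symm
    _ ≤ ∑ i, ∑ j, A i j * (y j * (x i / y i)) :=
        Finset.sum_le_sum fun i _ => Finset.sum_le_sum fun j _ => hterm i j
    _ = ∑ i, (A *ᵥ y) i * (x i / y i) := by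
        simp only [mulVec, dotProduct, Finset.sum_mul, mul_assoc]

end Matrix

theorem laplacian_lyapunov_inequality_general {n : ℕ}
    (Φ : Matrix (Fin n) (Fin n) ℝ) (σ S Sstar : Fin n → ℝ)
    (hoff : ∀ i j, i ≠ j → 0 ≤ Φ i j)
    (hcol : ∀ j, ∑ i, Φ i j = 0)
    (hσ : ∀ i, 0 < σ i)
    (hS : ∀ i, 0 < S i) (hSstar : ∀ i, 0 < Sstar i)
    (heq : (colScale σ Φ).mulVec Sstar = 0) :
    0 ≤ ∑ i, ((colScale σ Φ).mulVec S) i * (Sstar i / S i) := by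
  refine Matrix.sum_mulVec_mul_div_nonneg _ Sstar S (fun i j hij => ?_) (fun j => ?_) hSstar hS heq
  · exact mul_nonneg (hσ j).le (hoff i j hij)
  · simp only [colScale, Matrix.of_apply, ← Finset.mul_sum, hcol, mul_zero]

/-- Graph-Laplacian Lyapunov inequality: if `S, S*` are positive and `(σ▷Φ)S* = 0`,
then `⟨(σ▷Φ)S, diag(S)⁻¹ S*⟩ ≥ 0`. -/
theorem laplacian_lyapunov_inequality {n : ℕ}
    (Φ : Matrix (Fin n) (Fin n) ℝ) (σ S Sstar : Fin n → ℝ)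
    (hoff : ∀ i j, i ≠ j → 0 ≤ Φ i j)
    (hdiag : ∀ i, Φ i i = -1)
    (hcol : ∀ j, ∑ i, Φ i j = 0)
    (hσ : ∀ i, 0 < σ i)
    (hS : ∀ i, 0 < S i) (hSstar : ∀ i, 0 < Sstar i)
    (heq : (colScale σ Φ).mulVec Sstar = 0) :
    0 ≤ ∑ i, ((colScale σ Φ).mulVec S) i * (Sstar i / S i) :=
  laplacian_lyapunov_inequality_general Φ σ S Sstar hoff hcol hσ hS hSstar heq
end

section
/- Let G be an n×n nonnegative irreducible matrix, R₀ = ρ(G) its Perron root, and w, v its positive left and right Perron vectors with wᵀv = 1. Then id − (R₀·id − G)(R₀·id − G)^# = v wᵀ, where Q^# denotes the group inverse of Q; in particular every entry of the sensitivity matrix (∂R₀/∂g_{ij}) = v wᵀ is strictly positive. -/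
/-!
Since `Q Q^# Q = Q` and `Q` commutes with `Q^#`, the columns of `P = 1 - Q Q^#` lie in `ker Q`,
the `R₀`-eigenspace of `G`. Irreducibility makes this eigenspace the line through `v`: subtracting
from an eigenvector the largest multiple of `v` below it leaves a nonnegative eigenvector with a
zero entry, and positivity propagates along the powers of `G` until it vanishes. Hence `P = v cᵀ`,
and `wᵀ Q = 0` gives `wᵀ P = wᵀ`, that is `c = w` because `wᵀ v = 1`.
-/

theorem mul_one_sub_mul_eq_zero {R : Type*} [Ring R] {a b : R}
    (h₁ : a * b * a = a) (h₂ : a * b = b * a) : a * (1 - a * b) = 0 := by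
  rw [mul_sub, mul_one, h₂, ← mul_assoc, h₁, sub_self]

namespace Matrix

variable {ι 𝕜 : Type*} [Fintype ι] [DecidableEq ι]

section CommRing

variable [CommRing 𝕜]

theorem exists_eq_vecMulVec_of_mul_eq_zero {Q P : Matrix ι ι 𝕜} {v : ι → 𝕜}
    (hker : ∀ x, Q *ᵥ x = 0 → ∃ c : 𝕜, x = c • v) (hQP : Q * P = 0) :
    ∃ c : ι → 𝕜, P = vecMulVec v c := by
  have hcol : ∀ j, ∃ c : 𝕜, P.col j = c • v := fun j =>
    hker _ (by rw [← mulVec_single_one, mulVec_mulVec, hQP, zero_mulVec])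
  choose c hc using hcol
  refine ⟨c, ext fun i j => ?_⟩
  simpa [vecMulVec_apply, mul_comm] using congrFun (hc j) i

theorem pow_mulVec_of_mulVec_eq_smul {G : Matrix ι ι 𝕜} {R : 𝕜} {x : ι → 𝕜}
    (hx : G *ᵥ x = R • x) (k : ℕ) : (G ^ k) *ᵥ x = R ^ k • x := by
  induction k with
  | zero => simp
  | succ k ih =>
    rw [pow_succ', ← mulVec_mulVec, ih, mulVec_smul, hx, smul_smul, pow_succ]

theorem eq_zero_of_mulVec_eq_smul_of_nonneg [LinearOrder 𝕜] [IsStrictOrderedRing 𝕜]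
    {G : Matrix ι ι 𝕜} {R : 𝕜} (hG : ∀ i j, 0 ≤ G i j)
    (hirr : ∀ i j, ∃ k : ℕ, 0 < (G ^ k) i j) {y : ι → 𝕜} (hy : G *ᵥ y = R • y)
    (hy_nonneg : 0 ≤ y) {i : ι} (hi : y i = 0) : y = 0 := by
  funext j
  by_contra hj
  obtain ⟨k, hk⟩ := hirr i j
  have hpos : 0 < ((G ^ k) *ᵥ y) i :=
    Finset.sum_pos' (fun l _ => mul_nonneg (pow_apply_nonneg hG k i l) (hy_nonneg l))
      ⟨j, Finset.mem_univ j, mul_pos hk ((hy_nonneg j).lt_of_ne' hj)⟩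
  rw [pow_mulVec_of_mulVec_eq_smul hy, Pi.smul_apply, hi, smul_zero] at hpos
  exact hpos.false

end CommRing

theorem eq_smul_of_mulVec_eq_smul [Field 𝕜] [LinearOrder 𝕜] [IsStrictOrderedRing 𝕜]
    {G : Matrix ι ι 𝕜} {R : 𝕜} (hG : ∀ i j, 0 ≤ G i j)
    (hirr : ∀ i j, ∃ k : ℕ, 0 < (G ^ k) i j) {v x : ι → 𝕜} (hv_pos : ∀ i, 0 < v i)
    (hv : G *ᵥ v = R • v) (hx : G *ᵥ x = R • x) : ∃ c : 𝕜, x = c • v := by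
  cases isEmpty_or_nonempty ι
  · exact ⟨0, Subsingleton.elim _ _⟩
  obtain ⟨i, -, hi⟩ :=
    Finset.exists_min_image Finset.univ (fun i => x i / v i) Finset.univ_nonempty
  set c := x i / v i
  have hy : G *ᵥ (x - c • v) = R • (x - c • v) := by
    rw [mulVec_sub, mulVec_smul, hv, hx, smul_sub, smul_comm]
  have hy_nonneg : 0 ≤ x - c • v := fun j => by
    have := (le_div_iff₀ (hv_pos j)).mp (hi j (Finset.mem_univ j))
    simp only [Pi.zero_apply, Pi.sub_apply, Pi.smul_apply, smul_eq_mul]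
    linarith
  have hyi : (x - c • v) i = 0 := by
    simp [c, div_mul_cancel₀ _ (hv_pos i).ne']
  exact ⟨c, sub_eq_zero.mp (eq_zero_of_mulVec_eq_smul_of_nonneg hG hirr hy hy_nonneg hyi)⟩

end Matrix

open Matrix

theorem group_inverse_spectral_projection_general {n : ℕ}
    (G : Matrix (Fin n) (Fin n) ℝ)
    (hG : ∀ i j, 0 ≤ G i j) (hirr : MatIrreducible G)
    (v w : Fin n → ℝ)
    (hv_pos : ∀ i, 0 < v i) (hw_pos : ∀ i, 0 < w i)
    (hv : G.mulVec v = specRad G • v)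
    (hw : G.vecMul w = specRad G • w)
    (hnorm : ∑ i, w i * v i = 1)
    (Q Qsharp : Matrix (Fin n) (Fin n) ℝ)
    (hQ : Q = specRad G • (1 : Matrix (Fin n) (Fin n) ℝ) - G)
    (h1 : Q * Qsharp * Q = Q)
    (h3 : Q * Qsharp = Qsharp * Q) :
    (1 : Matrix (Fin n) (Fin n) ℝ) - Q * Qsharp = Matrix.vecMulVec v w ∧
      ∀ i j, 0 < Matrix.vecMulVec v w i j := by
  have hker : ∀ x, Q *ᵥ x = 0 → ∃ c : ℝ, x = c • v := fun x hx =>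
    eq_smul_of_mulVec_eq_smul hG hirr hv_pos hv <| by
      rw [hQ, sub_mulVec, smul_mulVec, one_mulVec, sub_eq_zero] at hx
      exact hx.symm
  obtain ⟨c, hc⟩ := exists_eq_vecMulVec_of_mul_eq_zero hker (mul_one_sub_mul_eq_zero h1 h3)
  have hwQ : w ᵥ* Q = 0 := by
    rw [hQ, vecMul_sub, vecMul_smul, vecMul_one, hw, sub_self]
  have hwc : w = c := by
    have hwP := congrArg (w ᵥ* ·) hc
    simp only [vecMul_sub, vecMul_one, ← vecMul_vecMul, hwQ, zero_vecMul, sub_zero,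
      vecMul_vecMulVec] at hwP
    rwa [dotProduct, hnorm, one_smul] at hwP
  subst hwc
  exact ⟨hc, fun i j => mul_pos (hv_pos i) (hw_pos j)⟩

/-- For `G` nonnegative irreducible with Perron root `R₀` and normalized positive left
and right Perron vectors `w, v` (`wᵀv = 1`), and `Q = R₀·id − G` with group inverse
`Q^#`, one has `id − Q Q^# = v wᵀ`; in particular every entry of the sensitivity matrix
`v wᵀ` is strictly positive. -/
theorem group_inverse_spectral_projection {n : ℕ}
    (G : Matrix (Fin n) (Fin n) ℝ)
    (hG : ∀ i j, 0 ≤ G i j) (hirr : MatIrreducible G)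
    (v w : Fin n → ℝ)
    (hv_pos : ∀ i, 0 < v i) (hw_pos : ∀ i, 0 < w i)
    (hv : G.mulVec v = specRad G • v)
    (hw : G.vecMul w = specRad G • w)
    (hnorm : ∑ i, w i * v i = 1)
    (Q Qsharp : Matrix (Fin n) (Fin n) ℝ)
    (hQ : Q = specRad G • (1 : Matrix (Fin n) (Fin n) ℝ) - G)
    (h1 : Q * Qsharp * Q = Q)
    (h2 : Qsharp * Q * Qsharp = Qsharp)
    (h3 : Q * Qsharp = Qsharp * Q) :
    (1 : Matrix (Fin n) (Fin n) ℝ) - Q * Qsharp = Matrix.vecMulVec v w ∧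
      ∀ i j, 0 < Matrix.vecMulVec v w i j :=
  group_inverse_spectral_projection_general G hG hirr v w hv_pos hw_pos hv hw hnorm Q Qsharp hQ h1
    h3
end
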